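/- Under the GBDT hypotheses (Π' = AΠq_1 + Πq_0, S' = Πq_1 j Π*, S invertible, X = Π*S⁻¹Π partitioned into h×h blocks X_{ij}), the block X_{22} satisfies the Riccati-type equation X_{22}' = -X_{12} - X_{22}² - X_{21}. -/

import Mathlib

/-!
Differentiating `X = Π* S⁻¹ Π` with the product rule and `(S⁻¹)' = -S⁻¹ S' S⁻¹`, and using the
identity `A S - S A* = Π j Π*` in the form `S⁻¹ A = A* S⁻¹ + S⁻¹ Π j Π* S⁻¹`, gives
`X' = q₁* Y + Y q₁ + X j X q₁ - X q₁ j X + q₀* X + X q₀` with `Y = Π* A* S⁻¹ Π`.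
For the block matrices `q₁`, `q₀`, `j` of the statement the `Y`-terms, `X j X q₁` and the
potential `u` drop out of the `(2,2)` block, while `-X q₁ j X` contributes `-X₂₂²` and
`q₀* X + X q₀` contributes `-X₁₂ - X₂₁`.
-/

open Matrix

def HasEntrywiseDerivAt {𝕜 m n : Type*} [RCLike 𝕜] (F : ℝ → Matrix m n 𝕜)
    (F' : Matrix m n 𝕜) (x : ℝ) : Prop :=
  ∀ i j, HasDerivAt (fun y => F y i j) (F' i j) x

namespace HasEntrywiseDerivAt

variable {𝕜 l m n : Type*} [RCLike 𝕜] {x : ℝ}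

theorem mul [Fintype m] {F : ℝ → Matrix l m 𝕜} {G : ℝ → Matrix m n 𝕜} {F' : Matrix l m 𝕜}
    {G' : Matrix m n 𝕜} (hF : HasEntrywiseDerivAt F F' x) (hG : HasEntrywiseDerivAt G G' x) :
    HasEntrywiseDerivAt (fun y => F y * G y) (F' * G x + F x * G') x := fun i k => by
  simpa only [mul_apply, Matrix.add_apply, ← Finset.sum_add_distrib] using
    HasDerivAt.fun_sum (u := Finset.univ) fun j _ => (hF i j).fun_mul (hG j k)

theorem conjTranspose {F : ℝ → Matrix m n 𝕜} {F' : Matrix m n 𝕜}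
    (hF : HasEntrywiseDerivAt F F' x) : HasEntrywiseDerivAt (fun y => (F y)ᴴ) F'ᴴ x :=
  fun i j => (hF j i).star

section Inverse

attribute [local instance] Matrix.linftyOpNormedRing Matrix.linftyOpNormedAlgebra

variable [Fintype n] [DecidableEq n] {F : ℝ → Matrix n n 𝕜} {F' : Matrix n n 𝕜}

theorem iff_hasDerivAt : HasEntrywiseDerivAt F F' x ↔ HasDerivAt F F' x := by
  let e : (n → n → 𝕜) ≃L[ℝ] Matrix n n 𝕜 := (ofLinearEquiv ℝ).toContinuousLinearEquiv
  constructor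
  · intro h
    have h' : HasDerivAt (fun y i j => F y i j) (fun i j => F' i j) x :=
      hasDerivAt_pi.mpr fun i => hasDerivAt_pi.mpr (h i)
    exact (e : (n → n → 𝕜) →L[ℝ] Matrix n n 𝕜).hasFDerivAt.comp_hasDerivAt x h'
  · intro h i j
    have h' := (e.symm : Matrix n n 𝕜 →L[ℝ] (n → n → 𝕜)).hasFDerivAt.comp_hasDerivAt x h
    exact hasDerivAt_pi.mp (hasDerivAt_pi.mp h' i) j

theorem inv (hF : HasEntrywiseDerivAt F F' x) (hx : IsUnit (F x)) :
    HasEntrywiseDerivAt (fun y => (F y)⁻¹) (-((F x)⁻¹ * F' * (F x)⁻¹)) x := by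
  rw [iff_hasDerivAt] at hF ⊢
  have h := (hasFDerivAt_ringInverse (𝕜 := ℝ) hx.unit).comp_hasDerivAt x hF
  simp only [Function.comp_def, ← Ring.inverse_unit, IsUnit.unit_spec,
    ← nonsing_inv_eq_ringInverse] at h
  -- the `linftyOp` topology agrees with the product topology only up to unfolding instances
  exact h

end Inverse

end HasEntrywiseDerivAt

section Algebra

variable {R ι κ : Type*} [CommRing R] [Fintype ι]

theorem nonsing_inv_mul_eq_of_mul_sub_mul [DecidableEq ι] {A B C S : Matrix ι ι R}
    (hS : IsUnit S) (h : A * S - S * B = C) : S⁻¹ * A = B * S⁻¹ + S⁻¹ * C * S⁻¹ := by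
  have hdet : IsUnit S.det := (isUnit_iff_isUnit_det S).mp hS
  rw [← h, Matrix.mul_sub, Matrix.sub_mul, ← Matrix.mul_assoc,
    mul_nonsing_inv_cancel_right _ _ hdet, nonsing_inv_mul_cancel_left _ _ hdet, add_sub_cancel]

variable [StarRing R] [Fintype κ]

theorem gbdt_deriv_eq (A Si : Matrix ι ι R) (P : Matrix ι κ R) (q1 q0 j : Matrix κ κ R)
    (hSiA : Si * A = Aᴴ * Si + Si * (P * j * Pᴴ) * Si) :
    ((A * P * q1 + P * q0)ᴴ * Si + Pᴴ * -(Si * (P * q1 * j * Pᴴ) * Si)) * P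
        + Pᴴ * Si * (A * P * q1 + P * q0)
      = q1ᴴ * (Pᴴ * Aᴴ * Si * P) + Pᴴ * Aᴴ * Si * P * q1
        + Pᴴ * Si * P * j * (Pᴴ * Si * P) * q1 - Pᴴ * Si * P * q1 * j * (Pᴴ * Si * P)
        + q0ᴴ * (Pᴴ * Si * P) + Pᴴ * Si * P * q0 := by
  have hSiAP : ∀ B : Matrix ι κ R,
      Si * (A * B) = Aᴴ * (Si * B) + Si * (P * (j * (Pᴴ * (Si * B)))) := fun B => by
    rw [← Matrix.mul_assoc, hSiA]
    simp only [Matrix.add_mul, Matrix.mul_assoc]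
  simp only [conjTranspose_mul, conjTranspose_add, Matrix.mul_add, Matrix.add_mul,
    Matrix.neg_mul, Matrix.mul_neg, Matrix.mul_assoc, sub_eq_add_neg, hSiAP]
  abel

end Algebra

theorem hasEntrywiseDerivAt_conjTranspose_mul_inv_mul {𝕜 ι κ : Type*} [RCLike 𝕜] [Fintype ι]
    [DecidableEq ι] [Fintype κ] {P : ℝ → Matrix ι κ 𝕜} {S : ℝ → Matrix ι ι 𝕜}
    {A : Matrix ι ι 𝕜} {q1 q0 j : Matrix κ κ 𝕜} {x : ℝ}
    (hP : HasEntrywiseDerivAt P (A * P x * q1 + P x * q0) x)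
    (hS : HasEntrywiseDerivAt S (P x * q1 * j * (P x)ᴴ) x) (hSx : IsUnit (S x))
    (hid : A * S x - S x * Aᴴ = P x * j * (P x)ᴴ) :
    HasEntrywiseDerivAt (fun y => (P y)ᴴ * (S y)⁻¹ * P y)
      (q1ᴴ * ((P x)ᴴ * Aᴴ * (S x)⁻¹ * P x) + (P x)ᴴ * Aᴴ * (S x)⁻¹ * P x * q1
        + (P x)ᴴ * (S x)⁻¹ * P x * j * ((P x)ᴴ * (S x)⁻¹ * P x) * q1
        - (P x)ᴴ * (S x)⁻¹ * P x * q1 * j * ((P x)ᴴ * (S x)⁻¹ * P x)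
        + q0ᴴ * ((P x)ᴴ * (S x)⁻¹ * P x) + (P x)ᴴ * (S x)⁻¹ * P x * q0) x := by
  rw [← gbdt_deriv_eq _ _ _ _ _ _ (nonsing_inv_mul_eq_of_mul_sub_mul hSx hid)]
  exact (hP.conjTranspose.mul (hS.inv hSx)).mul hP

theorem toBlocks₂₂_gbdt_deriv {R h : Type*} [CommRing R] [StarRing R] [Fintype h]
    [DecidableEq h] (u : Matrix h h R) (X Y : Matrix (h ⊕ h) (h ⊕ h) R) :
    ((fromBlocks 0 0 1 0)ᴴ * Y + Y * fromBlocks 0 0 1 0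
        + X * fromBlocks 0 1 (-1) 0 * X * fromBlocks 0 0 1 0
        - X * fromBlocks 0 0 1 0 * fromBlocks 0 1 (-1) 0 * X
        + (-fromBlocks 0 1 u 0)ᴴ * X + X * -fromBlocks 0 1 u 0).toBlocks₂₂
      = -X.toBlocks₁₂ - X.toBlocks₂₂ ^ 2 - X.toBlocks₂₁ := by
  rw [← fromBlocks_toBlocks X, ← fromBlocks_toBlocks Y]
  simp only [fromBlocks_conjTranspose, conjTranspose_zero, conjTranspose_one, conjTranspose_neg,
    fromBlocks_multiply, fromBlocks_add, fromBlocks_neg, zero_mul, one_mul, zero_add, add_zero,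
    mul_zero, mul_one, mul_neg, neg_mul, neg_zero, sub_eq_add_neg, toBlocks_fromBlocks₂₂,
    toBlocks_fromBlocks₁₂, toBlocks_fromBlocks₂₁]
  noncomm_ring

theorem stmt_7_general (n h : ℕ)
    (A : Matrix (Fin n) (Fin n) ℂ)
    (u : ℝ → Matrix (Fin h) (Fin h) ℂ)
    (q1 j : Matrix (Fin h ⊕ Fin h) (Fin h ⊕ Fin h) ℂ)
    (q0 : ℝ → Matrix (Fin h ⊕ Fin h) (Fin h ⊕ Fin h) ℂ)
    (hq1 : q1 = Matrix.fromBlocks 0 0 1 0)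
    (hq0 : ∀ x, q0 x = -(Matrix.fromBlocks 0 1 (u x) 0))
    (hj : j = Matrix.fromBlocks 0 1 (-1) 0)
    (Pi : ℝ → Matrix (Fin n) (Fin h ⊕ Fin h) ℂ)
    (S : ℝ → Matrix (Fin n) (Fin n) ℂ)
    (hPi : ∀ x i p, HasDerivAt (fun y => Pi y i p)
      ((A * Pi x * q1 + Pi x * q0 x) i p) x)
    (hS : ∀ x i p, HasDerivAt (fun y => S y i p)
      ((Pi x * q1 * j * (Pi x)ᴴ) i p) x)
    (hSinv : ∀ x, IsUnit (S x))
    (hid : ∀ x, A * S x - S x * Aᴴ = Pi x * j * (Pi x)ᴴ)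
    (X : ℝ → Matrix (Fin h ⊕ Fin h) (Fin h ⊕ Fin h) ℂ)
    (hX : ∀ x, X x = (Pi x)ᴴ * (S x)⁻¹ * Pi x) :
    ∀ x i p, HasDerivAt (fun y => (X y).toBlocks₂₂ i p)
      ((-(X x).toBlocks₁₂ - (X x).toBlocks₂₂ ^ 2 - (X x).toBlocks₂₁) i p)
      x := by
  intro x i p
  have hXd := hasEntrywiseDerivAt_conjTranspose_mul_inv_mul (hPi x) (hS x) (hSinv x) (hid x)
  subst hq1 hj
  rw [← funext hX, ← hX x, hq0 x] at hXd
  rw [← toBlocks₂₂_gbdt_deriv (u x)]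
  exact hXd (Sum.inr i) (Sum.inr p)

/-- under the GBDT hypotheses, `X₂₂' = -X₁₂ - X₂₂² - X₂₁`,
where `X = Π* S⁻¹ Π` is partitioned into `h × h` blocks `X_{ij}`. -/
theorem stmt_7 (n h : ℕ)
    (A : Matrix (Fin n) (Fin n) ℂ)
    (u : ℝ → Matrix (Fin h) (Fin h) ℂ) (hu : ∀ x, (u x)ᴴ = u x)
    (q1 j : Matrix (Fin h ⊕ Fin h) (Fin h ⊕ Fin h) ℂ)
    (q0 : ℝ → Matrix (Fin h ⊕ Fin h) (Fin h ⊕ Fin h) ℂ)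
    (hq1 : q1 = Matrix.fromBlocks 0 0 1 0)
    (hq0 : ∀ x, q0 x = -(Matrix.fromBlocks 0 1 (u x) 0))
    (hj : j = Matrix.fromBlocks 0 1 (-1) 0)
    (Pi : ℝ → Matrix (Fin n) (Fin h ⊕ Fin h) ℂ)
    (S : ℝ → Matrix (Fin n) (Fin n) ℂ)
    (hPi : ∀ x i p, HasDerivAt (fun y => Pi y i p)
      ((A * Pi x * q1 + Pi x * q0 x) i p) x)
    (hS : ∀ x i p, HasDerivAt (fun y => S y i p)
      ((Pi x * q1 * j * (Pi x)ᴴ) i p) x)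
    (hSinv : ∀ x, IsUnit (S x))
    (hid : ∀ x, A * S x - S x * Aᴴ = Pi x * j * (Pi x)ᴴ)
    (X : ℝ → Matrix (Fin h ⊕ Fin h) (Fin h ⊕ Fin h) ℂ)
    (hX : ∀ x, X x = (Pi x)ᴴ * (S x)⁻¹ * Pi x) :
    ∀ x i p, HasDerivAt (fun y => (X y).toBlocks₂₂ i p)
      ((-(X x).toBlocks₁₂ - (X x).toBlocks₂₂ ^ 2 - (X x).toBlocks₂₁) i p)
      x :=
  stmt_7_general n h A u q1 j q0 hq1 hq0 hj Pi S hPi hS hSinv hid X hX
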